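/- arXiv:1907.13593 — 4 statements merged into one kernel-verified Lean document; each statement's English description precedes it below -/
import Mathlib

section
/- Let Δ = {x_0,...,x_n} ⊂ ℝⁿ be the vertex set of a unit n-simplex centered at z, and let Ω = ⋂_{i=0}^n closedBall(x_i, 1). Then Ω ⊆ closedBall(z, r_n) where r_n = √(n/(2n+2)), and Ω ∩ sphere(z, r_n) = Δ. -/
/-!
Pass to barycentric coordinates `w` with respect to the simplex. Since all edges have length one,
`dist q₁ q₂ ^ 2 = ∑ i, (w₁ i - w₂ i) ^ 2 / 2`; in particular the vertices are affinely independent.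
With `S = ∑ i, w i ^ 2`, the condition `dist q (x j) ≤ 1` reads `S - 1 ≤ 2 * w j`, and
`dist q z ^ 2 = (S - 1 / (n + 1)) / 2`. If `S > 1`, all `w j` would be positive, but nonnegative
weights summing to one have `S ≤ 1`; hence `S ≤ 1`, which is the ball bound. On the sphere `S = 1`,
so all `w j ≥ 0`, and nonnegative weights with `∑ w = ∑ w ^ 2 = 1` are a standard basis vector.
-/

open Metric Finset

section SumSq

variable {ι : Type*} [Fintype ι] {w : ι → ℝ}

theorem sum_sq_le_one_of_sum_eq_one (hw : ∑ i, w i = 1)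
    (h : ∀ j, ∑ i, w i ^ 2 - 1 ≤ 2 * w j) : ∑ i, w i ^ 2 ≤ 1 := by
  by_contra! hlt
  have hle := sum_sq_le_sq_sum_of_nonneg (s := univ) (f := w) fun j _ => by linarith [h j]
  rw [hw, one_pow] at hle
  linarith

theorem exists_eq_single_of_sum_sq_eq_one [DecidableEq ι] (hw : ∑ i, w i = 1) (hnn : ∀ i, 0 ≤ w i)
    (hsq : ∑ i, w i ^ 2 = 1) : ∃ j, w = Pi.single j 1 := by
  have hle : ∀ i, w i ≤ 1 := fun i => hw ▸ single_le_sum (fun k _ => hnn k) (mem_univ i)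
  have hterm : ∀ i ∈ univ, w i * (1 - w i) = 0 := by
    refine (sum_eq_zero_iff_of_nonneg fun i _ => mul_nonneg (hnn i) (sub_nonneg.2 (hle i))).1 ?_
    simp only [mul_sub, mul_one, ← sq, sum_sub_distrib, hw, hsq, sub_self]
  obtain ⟨j, hj⟩ : ∃ j, w j ≠ 0 := by
    by_contra! h0
    simp [h0] at hw
  have hj1 : w j = 1 := by
    have := (mul_eq_zero.1 (hterm j (mem_univ j))).resolve_left hj
    linarith
  have hrest : ∑ i ∈ univ.erase j, w i = 0 := by
    linarith [add_sum_erase univ w (mem_univ j)]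
  refine ⟨j, funext fun i => ?_⟩
  rcases eq_or_ne i j with rfl | hij
  · simp [hj1]
  · rw [Pi.single_eq_of_ne hij]
    exact (sum_eq_zero_iff_of_nonneg fun k _ => hnn k).1 hrest i (mem_erase.2 ⟨hij, mem_univ i⟩)

end SumSq

theorem Finset.univ_centroid_eq_smul_sum {k V ι : Type*} [DivisionRing k] [CharZero k]
    [AddCommGroup V] [Module k V] [Fintype ι] [Nonempty ι] (p : ι → V) :
    univ.centroid k p = (Fintype.card ι : k)⁻¹ • ∑ i, p i := by
  rw [centroid_def, affineCombination_eq_linear_combination _ _ _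
    (sum_centroidWeights_eq_one_of_nonempty k _ univ_nonempty), smul_sum]
  simp only [centroidWeights_apply, card_univ]

section Equilateral

variable {ι V P : Type*} [Fintype ι] [NormedAddCommGroup V] [InnerProductSpace ℝ V]
  [MetricSpace P] [NormedAddTorsor V P] {p : ι → P} {d : ℝ}

theorem dist_affineCombination_sq_of_pairwise_dist_eq (hp : ∀ i j, i ≠ j → dist (p i) (p j) = d)
    {w₁ w₂ : ι → ℝ} (h₁ : ∑ i, w₁ i = 1) (h₂ : ∑ i, w₂ i = 1) :
    dist (univ.affineCombination ℝ p w₁) (univ.affineCombination ℝ p w₂) ^ 2 =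
      d ^ 2 / 2 * ∑ i, (w₁ i - w₂ i) ^ 2 := by
  classical
  have hdist : ∀ i j, dist (p i) (p j) * dist (p i) (p j) = d ^ 2 - if i = j then d ^ 2 else 0 := by
    intro i j
    split_ifs with hij
    · simp [hij]
    · rw [hp i j hij]; ring
  have hsum : ∑ i, (w₁ - w₂) i = 0 := by simp [sum_sub_distrib, h₁, h₂]
  rw [sq, EuclideanGeometry.dist_affineCombination p h₁ h₂]
  simp_rw [hdist, mul_sub, sum_sub_distrib, ← sum_mul, ← mul_sum, mul_ite, mul_zero, sum_ite_eq,
    mem_univ, if_true, ← sum_mul, hsum]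
  simp only [Pi.sub_apply, sq]
  ring

theorem affineIndependent_of_pairwise_dist_eq (hd : d ≠ 0)
    (hp : ∀ i j, i ≠ j → dist (p i) (p j) = d) : AffineIndependent ℝ p := by
  rw [affineIndependent_iff_eq_of_fintype_affineCombination_eq]
  intro w₁ w₂ h₁ h₂ heq
  have hsq := dist_affineCombination_sq_of_pairwise_dist_eq hp h₁ h₂
  rw [heq, dist_self, zero_pow two_ne_zero, eq_comm, mul_eq_zero, or_iff_right (by positivity),
    sum_eq_zero_iff_of_nonneg fun i _ => sq_nonneg _] at hsq
  exact funext fun i => sub_eq_zero.1 (pow_eq_zero_iff two_ne_zero |>.1 (hsq i (mem_univ i)))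

theorem exists_affineBasis_of_pairwise_dist_eq [FiniteDimensional ℝ V]
    (hcard : Fintype.card ι = Module.finrank ℝ V + 1) (hd : d ≠ 0)
    (hp : ∀ i j, i ≠ j → dist (p i) (p j) = d) : ∃ b : AffineBasis ι ℝ P, ⇑b = p :=
  have hind := affineIndependent_of_pairwise_dist_eq hd hp
  ⟨⟨p, hind, hind.affineSpan_eq_top_iff_card_eq_finrank_add_one.2 hcard⟩, rfl⟩

namespace AffineBasis

theorem dist_sq_eq_of_pairwise_dist_eq (b : AffineBasis ι ℝ P)
    (hb : ∀ i j, i ≠ j → dist (b i) (b j) = d) (q₁ q₂ : P) :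
    dist q₁ q₂ ^ 2 = d ^ 2 / 2 * ∑ i, (b.coord i q₁ - b.coord i q₂) ^ 2 := by
  conv_lhs => rw [← b.affineCombination_coord_eq_self q₁, ← b.affineCombination_coord_eq_self q₂]
  exact dist_affineCombination_sq_of_pairwise_dist_eq hb (b.sum_coord_apply_eq_one q₁)
    (b.sum_coord_apply_eq_one q₂)

variable (b : AffineBasis ι ℝ P) (hb : ∀ i j, i ≠ j → dist (b i) (b j) = 1)
include hb

theorem dist_vertex_sq_of_pairwise_dist_eq_one (q : P) (j : ι) :
    dist q (b j) ^ 2 = (∑ i, b.coord i q ^ 2 - 2 * b.coord j q + 1) / 2 := by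
  classical
  rw [b.dist_sq_eq_of_pairwise_dist_eq hb]
  simp only [one_pow, one_div, coord_apply, sub_sq, mul_ite, mul_one, mul_zero, ite_pow, ne_eq,
    OfNat.ofNat_ne_zero, not_false_eq_true, zero_pow, sum_add_distrib, sum_sub_distrib, sum_ite_eq',
    mem_univ, ↓reduceIte]
  ring

theorem dist_centroid_sq_of_pairwise_dist_eq_one (q : P) :
    dist q (univ.centroid ℝ b) ^ 2 = (∑ i, b.coord i q ^ 2 - (Fintype.card ι : ℝ)⁻¹) / 2 := by
  rw [b.dist_sq_eq_of_pairwise_dist_eq hb]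
  have := b.nonempty
  have hN : (Fintype.card ι : ℝ) ≠ 0 := by positivity
  simp only [one_pow, one_div, coord_apply_centroid _ (mem_univ _), card_univ, sub_sq, inv_pow,
    sum_add_distrib, sum_sub_distrib, ← sum_mul, ← mul_sum, b.sum_coord_apply_eq_one, mul_one,
    sum_const, nsmul_eq_mul]
  field_simp
  ring

theorem mem_iInter_closedBall_iff_of_pairwise_dist_eq_one {q : P} :
    q ∈ ⋂ i, closedBall (b i) 1 ↔ ∀ j, ∑ i, b.coord i q ^ 2 - 1 ≤ 2 * b.coord j q := by
  simp only [Set.mem_iInter, mem_closedBall]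
  refine forall_congr' fun j => ?_
  rw [← sq_le_one_iff₀ dist_nonneg, b.dist_vertex_sq_of_pairwise_dist_eq_one hb]
  constructor <;> intro h <;> linarith

theorem iInter_closedBall_subset_closedBall_centroid :
    ⋂ i, closedBall (b i) 1 ⊆
      closedBall (univ.centroid ℝ b) √((1 - (Fintype.card ι : ℝ)⁻¹) / 2) := by
  intro q hq
  have hS := sum_sq_le_one_of_sum_eq_one (b.sum_coord_apply_eq_one q)
    ((b.mem_iInter_closedBall_iff_of_pairwise_dist_eq_one hb).1 hq)
  rw [mem_closedBall, ← Real.sqrt_sq dist_nonneg, b.dist_centroid_sq_of_pairwise_dist_eq_one hb]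
  gcongr

theorem dist_centroid_eq_iff_of_pairwise_dist_eq_one {q : P} :
    dist q (univ.centroid ℝ b) = √((1 - (Fintype.card ι : ℝ)⁻¹) / 2) ↔
      ∑ i, b.coord i q ^ 2 = 1 := by
  have := b.nonempty
  have hr : 0 ≤ (1 - (Fintype.card ι : ℝ)⁻¹) / 2 := by
    have : (Fintype.card ι : ℝ)⁻¹ ≤ 1 := inv_le_one_of_one_le₀ (by exact_mod_cast Fintype.card_pos)
    linarith
  rw [← sq_eq_sq₀ dist_nonneg (Real.sqrt_nonneg _), Real.sq_sqrt hr,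
    b.dist_centroid_sq_of_pairwise_dist_eq_one hb]
  constructor <;> intro h <;> linarith

theorem iInter_closedBall_inter_sphere_centroid :
    (⋂ i, closedBall (b i) 1) ∩ sphere (univ.centroid ℝ b) √((1 - (Fintype.card ι : ℝ)⁻¹) / 2) =
      Set.range b := by
  classical
  apply Set.Subset.antisymm
  · rintro q ⟨hq, hsph⟩
    rw [mem_sphere, b.dist_centroid_eq_iff_of_pairwise_dist_eq_one hb] at hsph
    have hnn : ∀ j, 0 ≤ b.coord j q := by
      intro j
      linarith [(b.mem_iInter_closedBall_iff_of_pairwise_dist_eq_one hb).1 hq j]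
    obtain ⟨j, hj⟩ := exists_eq_single_of_sum_sq_eq_one (b.sum_coord_apply_eq_one q) hnn hsph
    refine ⟨j, b.ext_elem fun i => ?_⟩
    rw [coord_apply, congrFun hj i, Pi.single_apply]
  · rintro _ ⟨j, rfl⟩
    refine ⟨(b.mem_iInter_closedBall_iff_of_pairwise_dist_eq_one hb).2 fun i => ?_, ?_⟩
    · simp only [coord_apply, ite_pow, one_pow, ne_eq, OfNat.ofNat_ne_zero, not_false_eq_true,
        zero_pow, sum_ite_eq', mem_univ, ↓reduceIte, sub_self, mul_ite, mul_one, mul_zero]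
      positivity
    · rw [mem_sphere, b.dist_centroid_eq_iff_of_pairwise_dist_eq_one hb]
      simp [coord_apply]

end AffineBasis

end Equilateral

theorem reuleaux_simplex (n : ℕ) (x : Fin (n + 1) → EuclideanSpace ℝ (Fin n))
    (h : ∀ i j, i ≠ j → dist (x i) (x j) = 1)
    (z : EuclideanSpace ℝ (Fin n)) (hz : z = (n + 1 : ℝ)⁻¹ • ∑ i, x i) :
    (⋂ i, closedBall (x i) 1) ⊆ closedBall z (Real.sqrt (n / (2 * n + 2))) ∧
      (⋂ i, closedBall (x i) 1) ∩ sphere z (Real.sqrt (n / (2 * n + 2))) = Set.range x := by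
  obtain ⟨b, rfl⟩ := exists_affineBasis_of_pairwise_dist_eq
    (by rw [Fintype.card_fin, finrank_euclideanSpace_fin]) one_ne_zero h
  have hcentroid : z = univ.centroid ℝ b := by
    rw [hz, univ_centroid_eq_smul_sum, Fintype.card_fin, Nat.cast_succ]
  have hradius : (n : ℝ) / (2 * n + 2) = (1 - (Fintype.card (Fin (n + 1)) : ℝ)⁻¹) / 2 := by
    rw [Fintype.card_fin]
    push_cast
    field_simp
    ring
  rw [hcentroid, hradius]
  exact ⟨b.iInter_closedBall_subset_closedBall_centroid h,
    b.iInter_closedBall_inter_sphere_centroid h⟩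
end

section
/- Let x_0,...,x_n be the vertices of a unit n-simplex in ℝⁿ and Ω = ⋂_i closedBall(x_i, 1). Then the function V(x) = -∑_{i=0}^n |x - x_i|^β, for β ≥ 2, attains its minimum over Ω exactly on the set {x_0,...,x_n}. -/
/-!
Write a point `q` of `ℝⁿ` in barycentric coordinates `w` with respect to the unit simplex. Since all
edges have length one, `|q - xⱼ|² = (1 + ∑ wᵢ²) / 2 - wⱼ`. The constraint `|q - xⱼ| ≤ 1` forces
`∑ wᵢ² ≤ 1`, hence `∑ⱼ |q - xⱼ|² ≤ n`, with equality only when `w` is a vertex of the standard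
simplex. On `Ω` all distances are at most one, so `∑ⱼ |q - xⱼ|^β ≤ ∑ⱼ |q - xⱼ|² ≤ n`, and the
vertices attain the value `n`.
-/

open Metric Finset

section Weights

variable {ι : Type*} [Fintype ι] {t : ι → ℝ}

lemma sum_sq_le_one_of_nonneg (h0 : ∀ i, 0 ≤ t i) (h1 : ∑ i, t i = 1) : ∑ i, t i ^ 2 ≤ 1 := by
  calc ∑ i, t i ^ 2 ≤ ∑ i, t i := sum_le_sum fun i _ => by
        have : t i ≤ 1 := h1 ▸ single_le_sum (fun j _ => h0 j) (mem_univ i)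
        nlinarith [h0 i]
    _ = 1 := h1

lemma sum_sq_le_one_of_forall_le (h1 : ∑ i, t i = 1)
    (h : ∀ i, (∑ j, t j ^ 2 - 1) / 2 ≤ t i) : ∑ i, t i ^ 2 ≤ 1 := by
  by_contra! hP
  exact hP.not_ge (sum_sq_le_one_of_nonneg (fun i => by linarith [h i]) h1)

lemma exists_eq_one_of_sum_sq_eq_one (h0 : ∀ i, 0 ≤ t i) (h1 : ∑ i, t i = 1)
    (h2 : ∑ i, t i ^ 2 = 1) : ∃ i, t i = 1 := by
  have hle : ∀ i, t i ≤ 1 := fun i => h1 ▸ single_le_sum (fun j _ => h0 j) (mem_univ i)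
  have hzero : ∀ i, t i * (1 - t i) = 0 := by
    have : ∑ i, t i * (1 - t i) = 0 := by
      simp only [mul_one_sub, sum_sub_distrib, h1, ← sq, h2, sub_self]
    exact congrFun ((Fintype.sum_eq_zero_iff_of_nonneg fun j =>
      mul_nonneg (h0 j) (sub_nonneg.2 (hle j))).1 this)
  obtain ⟨i, -, hi⟩ := exists_ne_zero_of_sum_ne_zero (h1 ▸ one_ne_zero : ∑ i, t i ≠ 0)
  exact ⟨i, by linarith [(mul_eq_zero.1 (hzero i)).resolve_left hi]⟩

end Weights

section Equilateral

variable {V P ι : Type*} [NormedAddCommGroup V] [InnerProductSpace ℝ V] [MetricSpace P]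
  [NormedAddTorsor V P] {p : ι → P}

lemma dist_le_one_of_pairwise_dist_eq_one (hp : Pairwise fun i j => dist (p i) (p j) = 1)
    (i j : ι) : dist (p i) (p j) ≤ 1 := by
  rcases eq_or_ne i j with rfl | hij
  · simp
  · exact (hp hij).le

variable [Fintype ι]

lemma sum_dist_rpow_of_pairwise_dist_eq_one (hp : Pairwise fun i j => dist (p i) (p j) = 1)
    {β : ℝ} (hβ : β ≠ 0) (j : ι) : ∑ i, dist (p j) (p i) ^ β = Fintype.card ι - 1 := by
  classical
  calc ∑ i, dist (p j) (p i) ^ β = ∑ i, (1 - if j = i then 1 else 0) :=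
        sum_congr rfl fun i _ => by
          rcases eq_or_ne j i with rfl | hji
          · simp [Real.zero_rpow hβ]
          · simp [hp hji, hji]
    _ = Fintype.card ι - 1 := by simp [sum_sub_distrib]

lemma sum_sum_mul_dist_mul_dist_of_pairwise_dist_eq_one
    (hp : Pairwise fun i j => dist (p i) (p j) = 1) (a : ι → ℝ) :
    ∑ i, ∑ j, a i * a j * (dist (p i) (p j) * dist (p i) (p j)) =
      (∑ i, a i) ^ 2 - ∑ i, a i ^ 2 := by
  classical
  have hd : ∀ i j, dist (p i) (p j) * dist (p i) (p j) = 1 - if i = j then 1 else 0 := by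
    intro i j
    rcases eq_or_ne i j with rfl | hij
    · simp
    · simp [hp hij, hij]
  simp only [hd, mul_one_sub, mul_ite, mul_one, mul_zero, sum_sub_distrib, sum_ite_eq,
    mem_univ, if_true, sq, sum_mul_sum]

lemma affineIndependent_of_pairwise_dist_eq_one
    (hp : Pairwise fun i j => dist (p i) (p j) = 1) : AffineIndependent ℝ p := by
  rw [affineIndependent_iff_of_fintype]
  intro w hw hv i
  have hsq : ∑ j, w j ^ 2 = 0 := by
    have := EuclideanGeometry.inner_weightedVSub p hw p hw
    rw [hv, inner_zero_left, sum_sum_mul_dist_mul_dist_of_pairwise_dist_eq_one hp, hw] at this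
    linarith
  exact pow_eq_zero_iff two_ne_zero |>.1 <|
    congrFun ((Fintype.sum_eq_zero_iff_of_nonneg fun j => sq_nonneg (w j)).1 hsq) i

lemma dist_affineCombination_sq_of_pairwise_dist_eq_one
    (hp : Pairwise fun i j => dist (p i) (p j) = 1) {w : ι → ℝ} (hw : ∑ i, w i = 1) (j : ι) :
    dist (univ.affineCombination ℝ p w) (p j) ^ 2 = (1 + ∑ i, w i ^ 2) / 2 - w j := by
  classical
  rw [← univ.affineCombination_piSingle ℝ p (mem_univ j), sq,
    EuclideanGeometry.dist_affineCombination p hw (by simp),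
    sum_sum_mul_dist_mul_dist_of_pairwise_dist_eq_one hp]
  simp only [Pi.sub_apply, Pi.single_apply, sub_sq, mul_ite, mul_one, mul_zero, ite_pow, one_pow,
    zero_pow two_ne_zero, sum_add_distrib, sum_sub_distrib, sum_ite_eq', mem_univ, if_true, hw,
    sub_self]
  ring

lemma sum_dist_sq_le_card_sub_one (hp : Pairwise fun i j => dist (p i) (p j) = 1) {q : P}
    (hq : q ∈ affineSpan ℝ (Set.range p)) (hball : ∀ i, dist q (p i) ≤ 1) :
    ∑ i, dist q (p i) ^ 2 ≤ Fintype.card ι - 1 ∧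
      (∑ i, dist q (p i) ^ 2 = Fintype.card ι - 1 → q ∈ Set.range p) := by
  obtain ⟨w, hw, rfl⟩ := eq_affineCombination_of_mem_affineSpan_of_fintype hq
  have hd := dist_affineCombination_sq_of_pairwise_dist_eq_one hp hw
  set s := ∑ i, w i ^ 2
  have hlow : ∀ j, (s - 1) / 2 ≤ w j := fun j => by
    nlinarith [hd j, hball j, dist_nonneg (x := univ.affineCombination ℝ p w) (y := p j)]
  have hs : s ≤ 1 := sum_sq_le_one_of_forall_le hw hlow
  have hsum : ∑ i, dist (univ.affineCombination ℝ p w) (p i) ^ 2 =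
      Fintype.card ι * ((1 + s) / 2) - 1 := by
    simp only [hd, sum_sub_distrib, hw, sum_const, card_univ, nsmul_eq_mul]
  have hcard : (0 : ℝ) < Fintype.card ι := by
    obtain ⟨i, -, -⟩ := exists_ne_zero_of_sum_ne_zero (hw ▸ one_ne_zero : ∑ i, w i ≠ 0)
    exact_mod_cast Fintype.card_pos_iff.2 ⟨i⟩
  refine ⟨by rw [hsum]; nlinarith, fun heq => ?_⟩
  have hs1 : s = 1 := by nlinarith
  obtain ⟨j, hj⟩ := exists_eq_one_of_sum_sq_eq_one (fun i => by linarith [hlow i]) hw hs1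
  refine ⟨j, (dist_eq_zero.1 <| pow_eq_zero_iff two_ne_zero |>.1 ?_).symm⟩
  rw [hd j, hj, hs1]
  norm_num

end Equilateral

theorem simplex_potential_minimized_at_vertices (n : ℕ) (β : ℝ) (hβ : 2 ≤ β)
    (x : Fin (n + 1) → EuclideanSpace ℝ (Fin n))
    (h : ∀ i j, i ≠ j → dist (x i) (x j) = 1) :
    {y | y ∈ (⋂ i, closedBall (x i) 1) ∧
        ∀ w ∈ (⋂ i, closedBall (x i) 1),
          -(∑ i, dist y (x i) ^ β) ≤ -(∑ i, dist w (x i) ^ β)}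
      = Set.range x := by
  have hspan : affineSpan ℝ (Set.range x) = ⊤ :=
    (affineIndependent_of_pairwise_dist_eq_one h).affineSpan_eq_top_iff_card_eq_finrank_add_one.2
      (by simp)
  have hvertex : ∀ j, x j ∈ ⋂ i, closedBall (x i) 1 := fun j =>
    Set.mem_iInter.2 (dist_le_one_of_pairwise_dist_eq_one h j)
  have hrpow_le_sq : ∀ w ∈ ⋂ i, closedBall (x i) 1,
      ∑ i, dist w (x i) ^ β ≤ ∑ i, dist w (x i) ^ 2 := fun w hw =>
    sum_le_sum fun i _ => by
      simpa using Real.rpow_le_rpow_of_exponent_ge' dist_nonneg (Set.mem_iInter.1 hw i)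
        zero_le_two hβ
  have hbound := fun w (hw : w ∈ ⋂ i, closedBall (x i) 1) =>
    sum_dist_sq_le_card_sub_one (q := w) h (by simp [hspan]) fun i => Set.mem_iInter.1 hw i
  have hvalue := sum_dist_rpow_of_pairwise_dist_eq_one h (by linarith : β ≠ 0)
  ext y
  constructor
  · rintro ⟨hy, hmin⟩
    refine (hbound y hy).2 (le_antisymm (hbound y hy).1 ?_)
    calc _ = ∑ i, dist (x 0) (x i) ^ β := (hvalue 0).symm
      _ ≤ ∑ i, dist y (x i) ^ β := neg_le_neg_iff.1 (hmin (x 0) (hvertex 0))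
      _ ≤ _ := hrpow_le_sq y hy
  · rintro ⟨j, rfl⟩
    refine ⟨hvertex j, fun w hw => neg_le_neg ?_⟩
    rw [hvalue j]
    exact (hrpow_le_sq w hw).trans (hbound w hw).1
end

section
/- Let x_0, ..., x_n be the vertices of a unit n-simplex in ℝⁿ. Then the matrix A_0 = ∑_{j=1}^n (x_0 - x_j) ⊗ (x_0 - x_j) (note |x_0 - x_j| = 1) satisfies A_0 ≥ (1/min{n,2}) Id as quadratic forms; equivalently, ⟨v, A_0 v⟩ ≥ |v|²/min{n,2} for all v ∈ ℝⁿ. -/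
/-!
The edge vectors `u j = x 0 - x (j + 1)` of a unit simplex are unit vectors at pairwise angle
`π / 3`, so their Gram matrix is `(I + J) / 2`. This matrix is invertible, hence the `u j` form
a basis, and writing `v = ∑ i, c i • u i` with `S = ∑ i, c i` turns both sides into quadratic
forms in `c`:
`‖v‖² = (∑ c i² + S²) / 2` and `∑ j, ⟪u j, v⟫² = (∑ c i² + (n + 2) S²) / 4`.
For `n ≥ 2` the second dominates half the first; for `n = 1` we have `∑ c i² = S²` and the two
agree.
-/

open scoped RealInnerProductSpace

lemma real_inner_sub_sub_eq_half_of_dist_eq_one {E : Type*} [NormedAddCommGroup E]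
    [InnerProductSpace ℝ E] {a b c : E} (hab : dist a b = 1) (hac : dist a c = 1)
    (hbc : dist b c = 1) : ⟪a - b, a - c⟫ = 1 / 2 := by
  have h := norm_sub_sq_real (a - b) (a - c)
  rw [sub_sub_sub_cancel_left, ← dist_eq_norm, ← dist_eq_norm, ← dist_eq_norm, dist_comm c b,
    hab, hac, hbc] at h
  linarith

lemma inner_sub_succ_sub_succ_of_dist_eq_one {E : Type*} [NormedAddCommGroup E]
    [InnerProductSpace ℝ E] {n : ℕ} {x : Fin (n + 1) → E}
    (h : ∀ i j, i ≠ j → dist (x i) (x j) = 1) (i j : Fin n) :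
    ⟪x 0 - x i.succ, x 0 - x j.succ⟫ = if i = j then 1 else 1 / 2 := by
  split_ifs with hij
  · rw [hij, real_inner_self_eq_norm_sq, ← dist_eq_norm, h 0 j.succ (Fin.succ_ne_zero j).symm]
    norm_num
  · exact real_inner_sub_sub_eq_half_of_dist_eq_one (h _ _ (Fin.succ_ne_zero i).symm)
      (h _ _ (Fin.succ_ne_zero j).symm) (h _ _ ((Fin.succ_injective n).ne hij))

section HalfGram

variable {E : Type*} [NormedAddCommGroup E] [InnerProductSpace ℝ E]
  {ι : Type*} [Fintype ι] [DecidableEq ι] {u : ι → E}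

lemma inner_sum_smul_of_gram_eq (hu : ∀ i j, ⟪u i, u j⟫ = if i = j then 1 else 1 / 2)
    (c : ι → ℝ) (k : ι) : ⟪u k, ∑ i, c i • u i⟫ = (c k + ∑ i, c i) / 2 := by
  have hterm : ∀ i, ⟪u k, c i • u i⟫ = c i / 2 + if k = i then c i / 2 else 0 := by
    intro i
    rw [real_inner_smul_right, hu]
    split_ifs <;> ring
  simp only [inner_sum, hterm, Finset.sum_add_distrib, Finset.sum_ite_eq, Finset.mem_univ,
    if_true, ← Finset.sum_div]
  ring

lemma linearIndependent_of_gram_eq (hu : ∀ i j, ⟪u i, u j⟫ = if i = j then 1 else 1 / 2) :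
    LinearIndependent ℝ u := by
  rw [Fintype.linearIndependent_iff]
  intro c hc
  have hcS : ∀ k, c k + ∑ i, c i = 0 := fun k => by
    have hk := inner_sum_smul_of_gram_eq hu c k
    rw [hc, inner_zero_right] at hk
    linarith
  have hS : ∑ i, c i = 0 := by
    have hsum : ∑ k, (c k + ∑ i, c i) = 0 := Finset.sum_eq_zero fun k _ => hcS k
    rw [Finset.sum_add_distrib, Finset.sum_const, Finset.card_univ, nsmul_eq_mul,
      ← one_add_mul] at hsum
    exact (mul_eq_zero.mp hsum).resolve_left (by positivity)
  intro k
  simpa [hS] using hcS k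

lemma norm_sum_smul_sq_of_gram_eq (hu : ∀ i j, ⟪u i, u j⟫ = if i = j then 1 else 1 / 2)
    (c : ι → ℝ) : ‖∑ i, c i • u i‖ ^ 2 = (∑ i, c i ^ 2 + (∑ i, c i) ^ 2) / 2 := by
  rw [← real_inner_self_eq_norm_sq]
  conv_lhs => rw [sum_inner]
  simp only [real_inner_smul_left, inner_sum_smul_of_gram_eq hu, mul_add, mul_div_assoc',
    ← Finset.sum_div, Finset.sum_add_distrib, ← Finset.sum_mul, sq]

lemma sum_inner_sum_smul_sq_of_gram_eq (hu : ∀ i j, ⟪u i, u j⟫ = if i = j then 1 else 1 / 2)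
    (c : ι → ℝ) : ∑ j, ⟪u j, ∑ i, c i • u i⟫ ^ 2
      = (∑ i, c i ^ 2 + (Fintype.card ι + 2) * (∑ i, c i) ^ 2) / 4 := by
  simp only [inner_sum_smul_of_gram_eq hu, div_pow, add_sq, mul_assoc, ← Finset.mul_sum,
    ← Finset.sum_div, Finset.sum_add_distrib, ← Finset.sum_mul, Finset.sum_const,
    Finset.card_univ, nsmul_eq_mul]
  ring

lemma norm_sq_div_min_le_sum_inner_sq_of_gram_eq
    (hu : ∀ i j, ⟪u i, u j⟫ = if i = j then 1 else 1 / 2) {v : E}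
    (hv : v ∈ Submodule.span ℝ (Set.range u)) :
    ‖v‖ ^ 2 / min (Fintype.card ι : ℝ) 2 ≤ ∑ j, ⟪u j, v⟫ ^ 2 := by
  obtain ⟨c, rfl⟩ := (Submodule.mem_span_range_iff_exists_fun ℝ).mp hv
  rw [norm_sum_smul_sq_of_gram_eq hu, sum_inner_sum_smul_sq_of_gram_eq hu]
  have hc : 0 ≤ ∑ i, c i ^ 2 := Finset.sum_nonneg fun i _ => sq_nonneg (c i)
  rcases lt_trichotomy (Fintype.card ι) 1 with hcard | hcard | hcard
  · rw [Nat.lt_one_iff.mp hcard]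
    simp only [Nat.cast_zero, zero_le_two, min_eq_left, div_zero]
    positivity
  · have : Unique ι := (Fintype.card_eq_one_iff_nonempty_unique.mp hcard).some
    rw [Fintype.sum_unique, Fintype.sum_unique, hcard, Nat.cast_one, min_eq_left one_le_two]
    linarith
  · have h2 : (2 : ℝ) ≤ Fintype.card ι := by exact_mod_cast hcard
    rw [min_eq_right h2]
    nlinarith [sq_nonneg (∑ i, c i)]

end HalfGram

theorem simplex_operator_lower_bound (n : ℕ)
    (x : Fin (n + 1) → EuclideanSpace ℝ (Fin n))
    (h : ∀ i j, i ≠ j → dist (x i) (x j) = 1)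
    (v : EuclideanSpace ℝ (Fin n)) :
    ‖v‖ ^ 2 / min (n : ℝ) 2 ≤ ∑ j : Fin n, ⟪x 0 - x j.succ, v⟫ ^ 2 := by
  have hgram := inner_sub_succ_sub_succ_of_dist_eq_one h
  have hspan : Submodule.span ℝ (Set.range fun j : Fin n => x 0 - x j.succ) = ⊤ :=
    (linearIndependent_of_gram_eq hgram).span_eq_top_of_card_eq_finrank' (by simp)
  simpa using norm_sq_div_min_le_sum_inner_sq_of_gram_eq hgram (hspan ▸ Submodule.mem_top)
end

section
/- Let x_0,...,x_{k-1} be the vertices of a regular (k-1)-simplex of side 1 in ℝⁿ, centered at the origin. Then the set S = {x ∈ ℝⁿ : |x - x_i| = 1 for i = 0,...,k-1} equals the intersection of the orthogonal complement of span{x_0,...,x_{k-1}} with the sphere of radius √((k+1)/(2k)) centered at the origin. -/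
/-! If the unit simplex `x` is centred at `0`, then `∑ⱼ ‖v - xⱼ‖² = k‖v‖² + ∑ⱼ ‖xⱼ‖²`; taking
`v = xᵢ` and averaging over `i` shows every vertex has squared norm `(k-1)/(2k)`. A point `y` at
distance `1` from all vertices then has `⟪y, xᵢ⟫ = (‖y‖² + ‖xᵢ‖² - 1)/2` independent of `i`, and these
inner products sum to `⟪y, ∑ xᵢ⟫ = 0`, so `y ⟂ xᵢ` and Pythagoras gives `‖y‖² = 1 - (k-1)/(2k)`. -/

open Metric RealInnerProductSpace

section Simplex

variable {E ι : Type*} [NormedAddCommGroup E]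

theorem sum_norm_sub_sq_of_pairwise_dist_eq_one [Fintype ι] [DecidableEq ι] {x : ι → E}
    (h : Pairwise fun i j ↦ dist (x i) (x j) = 1) (i : ι) :
    ∑ j, ‖x i - x j‖ ^ 2 = Fintype.card ι - 1 := by
  have hone : ∀ j ∈ Finset.univ.erase i, ‖x i - x j‖ ^ 2 = 1 := fun j hj ↦ by
    rw [← dist_eq_norm, h (Finset.ne_of_mem_erase hj).symm, one_pow]
  rw [← Finset.add_sum_erase _ _ (Finset.mem_univ i), Finset.sum_congr rfl hone, sub_self,
    norm_zero, zero_pow two_ne_zero, zero_add, Finset.sum_const, nsmul_one,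
    Finset.card_erase_of_mem (Finset.mem_univ i), Finset.card_univ,
    Nat.cast_pred (Fintype.card_pos_iff.mpr ⟨i⟩)]

variable [InnerProductSpace ℝ E]

theorem Submodule.mem_orthogonal_span_range_iff (x : ι → E) (y : E) :
    y ∈ (Submodule.span ℝ (Set.range x))ᗮ ↔ ∀ i, ⟪y, x i⟫ = 0 := by
  rw [← Submodule.span_singleton_le_iff_mem, ← Submodule.isOrtho_iff_le, Submodule.isOrtho_span]
  simp

variable [Fintype ι]

theorem sum_norm_sub_sq_of_sum_eq_zero {x : ι → E} (hsum : ∑ j, x j = 0) (v : E) :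
    ∑ j, ‖v - x j‖ ^ 2 = Fintype.card ι * ‖v‖ ^ 2 + ∑ j, ‖x j‖ ^ 2 := by
  simp only [norm_sub_sq_real, Finset.sum_add_distrib, Finset.sum_sub_distrib, ← Finset.mul_sum,
    ← inner_sum, hsum, inner_zero_right, mul_zero, sub_zero, Finset.sum_const, Finset.card_univ,
    nsmul_eq_mul]

theorem norm_sq_of_pairwise_dist_eq_one_of_sum_eq_zero {x : ι → E}
    (h : Pairwise fun i j ↦ dist (x i) (x j) = 1) (hsum : ∑ j, x j = 0) (i : ι) :
    ‖x i‖ ^ 2 = (Fintype.card ι - 1) / (2 * Fintype.card ι) := by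
  classical
  have hk : (Fintype.card ι : ℝ) ≠ 0 := Nat.cast_ne_zero.mpr (Fintype.card_pos_iff.mpr ⟨i⟩).ne'
  have hvertex : ∀ i, Fintype.card ι * ‖x i‖ ^ 2 + ∑ j, ‖x j‖ ^ 2 = Fintype.card ι - 1 :=
    fun i ↦ by
      rw [← sum_norm_sub_sq_of_sum_eq_zero hsum, sum_norm_sub_sq_of_pairwise_dist_eq_one h]
  have htotal : ∑ j, ‖x j‖ ^ 2 = (Fintype.card ι - 1) / 2 := by
    have := Finset.sum_congr rfl fun i (_ : i ∈ Finset.univ) ↦ hvertex i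
    rw [Finset.sum_add_distrib, ← Finset.mul_sum, Finset.sum_const, Finset.card_univ,
      Finset.sum_const, Finset.card_univ, nsmul_eq_mul, nsmul_eq_mul] at this
    field_simp
    exact mul_left_cancel₀ hk (by linarith)
  have := hvertex i
  rw [htotal] at this
  field_simp
  linarith

theorem inner_eq_zero_of_forall_dist_eq_of_sum_eq_zero {x : ι → E} {r s : ℝ}
    (hx : ∀ i, ‖x i‖ = r) (hsum : ∑ j, x j = 0) {y : E} (hy : ∀ i, dist y (x i) = s) (i : ι) :
    ⟪y, x i⟫ = 0 := by
  have hconst : ∀ j, ⟪y, x j⟫ = (‖y‖ ^ 2 + r ^ 2 - s ^ 2) / 2 := fun j ↦ by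
    have := norm_sub_sq_real y (x j)
    rw [← dist_eq_norm, hy, hx] at this
    linarith
  have hk : (Fintype.card ι : ℝ) ≠ 0 := Nat.cast_ne_zero.mpr (Fintype.card_pos_iff.mpr ⟨i⟩).ne'
  have : (Fintype.card ι : ℝ) * ((‖y‖ ^ 2 + r ^ 2 - s ^ 2) / 2) = 0 := by
    rw [← nsmul_eq_mul, ← Finset.card_univ, ← Finset.sum_const, ← Finset.sum_congr rfl
      fun j _ ↦ hconst j, ← inner_sum, hsum, inner_zero_right]
  rw [hconst, (mul_eq_zero.mp this).resolve_left hk]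

theorem dist_eq_one_iff_of_inner_eq_zero {y v : E} (hyv : ⟪y, v⟫ = 0) :
    dist y v = 1 ↔ ‖y‖ ^ 2 = 1 - ‖v‖ ^ 2 := by
  rw [dist_eq_norm, ← pow_eq_one_iff_of_nonneg (norm_nonneg _) two_ne_zero, sq, sq, sq,
    norm_sub_sq_eq_norm_sq_add_norm_sq_real hyv, eq_sub_iff_add_eq]

end Simplex

theorem sphere_of_equidistant_points_general (n k : ℕ) (hk : 1 ≤ k)
    (x : Fin k → EuclideanSpace ℝ (Fin n))
    (h : ∀ i j, i ≠ j → dist (x i) (x j) = 1)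
    (hsum : ∑ i, x i = 0) :
    {y : EuclideanSpace ℝ (Fin n) | ∀ i, dist y (x i) = 1}
      = ((Submodule.span ℝ (Set.range x))ᗮ : Set (EuclideanSpace ℝ (Fin n)))
          ∩ sphere 0 (Real.sqrt ((k + 1) / (2 * k))) := by
  have hx := norm_sq_of_pairwise_dist_eq_one_of_sum_eq_zero h hsum
  rw [Fintype.card_fin] at hx
  have hnorm : ∀ (i : Fin k) (y : EuclideanSpace ℝ (Fin n)),
      ‖y‖ = Real.sqrt ((k + 1) / (2 * k)) ↔ ‖y‖ ^ 2 = 1 - ‖x i‖ ^ 2 := fun i y ↦ by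
    have : (k : ℝ) ≠ 0 := by positivity
    rw [eq_comm, Real.sqrt_eq_iff_eq_sq (by positivity) (norm_nonneg y), hx i, eq_comm]
    field_simp
    ring_nf
  ext y
  simp only [Set.mem_ofPred_eq, Set.mem_inter_iff, SetLike.mem_coe, mem_sphere_zero_iff_norm,
    Submodule.mem_orthogonal_span_range_iff]
  constructor
  · intro hy
    have hperp := inner_eq_zero_of_forall_dist_eq_of_sum_eq_zero
      (fun i ↦ by rw [← Real.sqrt_sq (norm_nonneg _), hx i]) hsum hy
    obtain ⟨i⟩ : Nonempty (Fin k) := ⟨⟨0, hk⟩⟩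
    exact ⟨hperp, (hnorm i y).mpr ((dist_eq_one_iff_of_inner_eq_zero (hperp i)).mp (hy i))⟩
  · rintro ⟨hperp, hy⟩ i
    exact (dist_eq_one_iff_of_inner_eq_zero (hperp i)).mpr ((hnorm i y).mp hy)

theorem sphere_of_equidistant_points (n k : ℕ) (hk : 1 ≤ k) (hkn : k ≤ n)
    (x : Fin k → EuclideanSpace ℝ (Fin n))
    (h : ∀ i j, i ≠ j → dist (x i) (x j) = 1)
    (hsum : ∑ i, x i = 0) :
    {y : EuclideanSpace ℝ (Fin n) | ∀ i, dist y (x i) = 1}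
      = ((Submodule.span ℝ (Set.range x))ᗮ : Set (EuclideanSpace ℝ (Fin n)))
          ∩ sphere 0 (Real.sqrt ((k + 1) / (2 * k))) :=
  sphere_of_equidistant_points_general n k hk x h hsum
end
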